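/- arXiv:math/0605041 — 4 statements merged into one kernel-verified Lean document; each statement's English description precedes it below -/
import Mathlib

section
/- Proposition: Let g be a framed Lie algebra over k, and let ∇ : T(g) → End_k(T(g)) be the unique k-algebra homomorphism with ∇(x) = ∇_x for all x ∈ g. Then for every u ∈ J(g), the derivation extension of r(u) to T(g) equals ∇(e(u)); that is, r = ∇ ∘ e. -/
/-! Both `u ↦ r(u)` (extended to `T(g)`) and `u ↦ ∇(e(u))` are derivations of `T(g)`, and
derivations of `T(g)` agreeing on `g` are equal. On generators the recursions for `r` and `e`
match: `∇(e(x ⊗ y - y ⊗ x)) = [∇ₓ, ∇_y] - ∇_{[x,y]}` and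
`∇(x ⊗ e(u) - e(u) ⊗ x) = [∇ₓ, ∇(e(u))]`. These recursions reach all of `J(g)`: it is the sum
of the `gⁿ · Λ(g)`, each preserved by every `∇ₓ`, and `x ⊗ u = (x ⊗ u + ∇ₓ u) - ∇ₓ u`. -/

set_option linter.unusedSectionVars false

noncomputable section
open TensorAlgebra TensorProduct

variable (k : Type) [Field k] [CharZero k] (g : Type) [LieRing g] [LieAlgebra k g]

/-- `Λ(g)`: the span of the commutators `x ⊗ y - y ⊗ x` of generators. -/
def Lam : Submodule k (TensorAlgebra k g) :=
  Submodule.span k {w | ∃ x y : g, w = ι k x * ι k y - ι k y * ι k x}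

/-- `J(g) = T(g)·Λ(g)`, the left ideal generated by `Λ(g)`, as a `k`-submodule. -/
def Jg : Submodule k (TensorAlgebra k g) :=
  Submodule.span k {w | ∃ (a : TensorAlgebra k g) (x y : g),
    w = a * (ι k x * ι k y - ι k y * ι k x)}

lemma mul_mem_Jg {ω : TensorAlgebra k g} (hω : ω ∈ Lam k g) (b : TensorAlgebra k g) :
    b * ω ∈ Jg k g := by
  induction hω using Submodule.span_induction with
  | mem w hw =>
      obtain ⟨x, y, rfl⟩ := hw
      exact Submodule.subset_span ⟨b, x, y, rfl⟩
  | zero => simp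
  | add u v hu hv hbu hbv => simpa [mul_add] using (Jg k g).add_mem hbu hbv
  | smul a u hu hbu => simpa [mul_smul_comm] using (Jg k g).smul_mem a hbu

def mulJ {ω : TensorAlgebra k g} (hω : ω ∈ Lam k g) :
    TensorAlgebra k g →ₗ[k] Jg k g :=
  LinearMap.codRestrict _ (LinearMap.mulRight k ω) (mul_mem_Jg k g hω)

section Leibniz

variable {R A : Type*} [CommRing R] [Ring A] [Algebra R A]

def IsLeibniz (D : Module.End R A) : Prop :=
  ∀ a b, D (a * b) = D a * b + a * D b

namespace IsLeibniz

variable {D E : Module.End R A}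

lemma map_one (hD : IsLeibniz D) : D 1 = 0 := by
  simpa using hD 1 1

lemma sub (hD : IsLeibniz D) (hE : IsLeibniz E) : IsLeibniz (D - E) := fun a b => by
  simp only [LinearMap.sub_apply, hD a b, hE a b, sub_mul, mul_sub]
  abel

lemma commutator (hD : IsLeibniz D) (hE : IsLeibniz E) : IsLeibniz (D * E - E * D) := by
  intro a b
  simp only [LinearMap.sub_apply, Module.End.mul_apply, hD a b, hE a b, map_add]
  rw [hD (E a), hD a, hE (D a), hE a, sub_mul, mul_sub]
  abel

lemma mul_le_comap (hD : IsLeibniz D) {M N : Submodule R A} (hM : M ≤ M.comap D)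
    (hN : N ≤ N.comap D) : M * N ≤ (M * N).comap D :=
  Submodule.mul_le.2 fun m hm n hn => by
    rw [Submodule.mem_comap, hD]
    exact add_mem (Submodule.mul_mem_mul (hM hm) hn) (Submodule.mul_mem_mul hm (hN hn))

lemma pow_le_comap (hD : IsLeibniz D) {V : Submodule R A} (hV : V ≤ V.comap D) :
    ∀ n : ℕ, V ^ n ≤ (V ^ n).comap D
  | 0 => by
    rw [pow_zero, Submodule.one_eq_span, Submodule.span_le, Set.singleton_subset_iff]
    simp [hD.map_one]
  | n + 1 => by
    rw [pow_succ]
    exact hD.mul_le_comap (hD.pow_le_comap hV n) hV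

end IsLeibniz

end Leibniz

namespace TensorAlgebra

variable {R M : Type*} [CommRing R] [AddCommGroup M] [Module R M]

lemma isLeibniz_ext {D E : Module.End R (TensorAlgebra R M)} (hD : IsLeibniz D)
    (hE : IsLeibniz E) (h : ∀ x, D (ι R x) = E (ι R x)) : D = E := by
  ext a
  induction a using TensorAlgebra.induction with
  | algebraMap c => simp [Algebra.algebraMap_eq_smul_one, hD.map_one, hE.map_one]
  | ι x => exact h x
  | mul a b ha hb => rw [hD, hE, ha, hb]
  | add a b ha hb => rw [map_add, map_add, ha, hb]

lemma range_ι_le_comap {D : Module.End R (TensorAlgebra R M)} {f : M → M}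
    (hD : ∀ y, D (ι R y) = ι R (f y)) :
    LinearMap.range (ι R) ≤ (LinearMap.range (ι R)).comap D := by
  rintro _ ⟨y, rfl⟩
  exact ⟨f y, (hD y).symm⟩

lemma iSup_range_ι_pow_eq_top :
    ⨆ n : ℕ, LinearMap.range (ι R : M →ₗ[R] TensorAlgebra R M) ^ n = ⊤ :=
  (DirectSum.Decomposition.isInternal
    fun n : ℕ => LinearMap.range (ι R : M →ₗ[R] TensorAlgebra R M) ^ n).submodule_iSup_eq_top

end TensorAlgebra

lemma Lam_le_Jg : Lam k g ≤ Jg k g := fun ω hω => by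
  simpa using mul_mem_Jg k g hω 1

lemma mul_mem_Jg_of_mem (a : TensorAlgebra k g) {v : TensorAlgebra k g} (hv : v ∈ Jg k g) :
    a * v ∈ Jg k g := by
  refine (Submodule.span_le (p := (Jg k g).comap (LinearMap.mulLeft k a))).2 ?_ hv
  rintro _ ⟨b, x, y, rfl⟩
  exact Submodule.subset_span ⟨a * b, x, y, (mul_assoc _ _ _).symm⟩

lemma Jg_eq_iSup_pow_mul_Lam :
    Jg k g = ⨆ n : ℕ, LinearMap.range (ι k : g →ₗ[k] TensorAlgebra k g) ^ n * Lam k g := by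
  rw [← Submodule.iSup_mul, iSup_range_ι_pow_eq_top, Jg, Lam, ← Submodule.span_univ,
    Submodule.span_mul_span]
  congr 1
  ext w
  simp [Set.mem_mul, eq_comm]

lemma Lam_le_comap {D : Module.End k (TensorAlgebra k g)} (hD : IsLeibniz D) {f : g → g}
    (hDι : ∀ y, D (ι k y) = ι k (f y)) : Lam k g ≤ (Lam k g).comap D := by
  rw [Lam, Submodule.span_le]
  rintro _ ⟨x, y, rfl⟩
  have h : D (ι k x * ι k y - ι k y * ι k x) =
      (ι k (f x) * ι k y - ι k y * ι k (f x)) + (ι k x * ι k (f y) - ι k (f y) * ι k x) := by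
    rw [map_sub, hD, hD, hDι, hDι]
    abel
  rw [SetLike.mem_coe, Submodule.mem_comap, h]
  exact add_mem (Submodule.subset_span ⟨_, _, rfl⟩) (Submodule.subset_span ⟨_, _, rfl⟩)

lemma Jg_le_of_Lam_le {N : g → Module.End k (TensorAlgebra k g)} (hN : ∀ x, IsLeibniz (N x))
    {f : g → g → g} (hNι : ∀ x y, N x (ι k y) = ι k (f x y))
    {G : Submodule k (TensorAlgebra k g)} (hLam : Lam k g ≤ G)
    (hstep : ∀ x m, m ∈ G → N x m ∈ G → ι k x * m + N x m ∈ G) : Jg k g ≤ G := by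
  rw [Jg_eq_iSup_pow_mul_Lam]
  refine iSup_le fun n => ?_
  induction n with
  | zero => simpa using hLam
  | succ n ih =>
    rw [pow_succ', mul_assoc, Submodule.mul_le]
    rintro _ ⟨x, rfl⟩ m hm
    -- `∇ₓ` preserves `gⁿ · Λ(g)`, so `∇ₓ m` is already known to lie in `G`.
    have hNm : N x m ∈ G :=
      ih (((hN x).mul_le_comap ((hN x).pow_le_comap (range_ι_le_comap (hNι x)) n)
        (Lam_le_comap k g (hN x) (hNι x))) hm)
    simpa using sub_mem (hstep x m (ih hm) hNm) hNm

/-- **Proposition.** If `∇ : T(g) → End(T(g))` is the unique algebra homomorphism with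
`∇(x) = ∇ₓ` for `x ∈ g`, then the derivation extension of `r(u)` equals `∇(e(u))` for every
`u ∈ J(g)`; that is, `r = ∇ ∘ e`. -/
theorem r_eq_nabla_comp_e
    (d : g →ₗ[k] g →ₗ[k] g)
    (N : g → Module.End k (TensorAlgebra k g))
    (hNd : ∀ (x : g) (a b : TensorAlgebra k g), N x (a * b) = N x a * b + a * N x b)
    (hN : ∀ x y : g, N x (ι k y) = ι k (d x y))
    (r : Jg k g →ₗ[k] Module.End k g)
    (hr1 : ∀ (x y : g) (h : ι k x * ι k y - ι k y * ι k x ∈ Jg k g) (z : g),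
      r ⟨_, h⟩ z = d x (d y z) - d y (d x z) - d ⁅x, y⁆ z)
    (hr2 : ∀ (x : g) (u : Jg k g) (h : ι k x * (u : TensorAlgebra k g) + N x u ∈ Jg k g),
      r ⟨_, h⟩ = d x ∘ₗ r u - r u ∘ₗ d x)
    (rD : Jg k g →ₗ[k] Module.End k (TensorAlgebra k g))
    (hrD1 : ∀ (u : Jg k g) (z : g), rD u (ι k z) = ι k (r u z))
    (hrD2 : ∀ (u : Jg k g) (a b : TensorAlgebra k g),
      rD u (a * b) = rD u a * b + a * rD u b)
    (e : Jg k g →ₗ[k] TensorAlgebra k g)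
    (he1 : ∀ (x y : g) (h : ι k x * ι k y - ι k y * ι k x ∈ Jg k g),
      e ⟨_, h⟩ = ι k x * ι k y - ι k y * ι k x - ι k ⁅x, y⁆)
    (he2 : ∀ (x : g) (u : Jg k g) (h : ι k x * (u : TensorAlgebra k g) + N x u ∈ Jg k g),
      e ⟨_, h⟩ = ι k x * e u - e u * ι k x)
    (Nh : TensorAlgebra k g →ₐ[k] Module.End k (TensorAlgebra k g))
    (hNh : ∀ x : g, Nh (ι k x) = N x)
    (u : Jg k g) :
    rD u = Nh (e u) := by
  have base : ∀ x y (h : ι k x * ι k y - ι k y * ι k x ∈ Jg k g),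
      rD ⟨_, h⟩ = Nh (e ⟨_, h⟩) := fun x y h => by
    rw [he1, map_sub, map_sub, map_mul, map_mul, hNh, hNh, hNh]
    refine isLeibniz_ext (hrD2 _)
      (IsLeibniz.sub (IsLeibniz.commutator (hNd x) (hNd y)) (hNd _)) fun z => ?_
    simp [hrD1, hr1, hN]
  have step : ∀ x (w : Jg k g), rD w = Nh (e w) →
      ∀ h : ι k x * (w : TensorAlgebra k g) + N x w ∈ Jg k g,
      rD ⟨_, h⟩ = Nh (e ⟨_, h⟩) := fun x w hw h => by
    rw [he2, map_sub, map_mul, map_mul, hNh, ← hw]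
    refine isLeibniz_ext (hrD2 _) (IsLeibniz.commutator (hNd x) (hrD2 w)) fun z => ?_
    simp [hrD1, hr2, hN]
  let G := (LinearMap.eqLocus rD (Nh.toLinearMap ∘ₗ e)).map (Jg k g).subtype
  have hJG : Jg k g ≤ G := by
    refine Jg_le_of_Lam_le k g hNd hN ?_ ?_
    · rw [Lam, Submodule.span_le]
      rintro _ ⟨x, y, rfl⟩
      exact ⟨⟨_, Lam_le_Jg k g (Submodule.subset_span ⟨x, y, rfl⟩)⟩, base x y _, rfl⟩
    · rintro x _ ⟨w, hw, rfl⟩ ⟨v, -, hv⟩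
      have h : ι k x * (w : TensorAlgebra k g) + N x w ∈ Jg k g :=
        add_mem (mul_mem_Jg_of_mem k g _ w.2) (hv ▸ v.2)
      exact ⟨⟨_, h⟩, step x w hw h, rfl⟩
  obtain ⟨w, hw, hwu⟩ := hJG u.2
  rwa [← Subtype.ext hwu]
end
end

section
/- Lemma 2: Let g be a framed Lie algebra over k. For every ω ∈ Λ(g) and every v ∈ T(g), K(ω ⊗ v + ρ(ω)(v)) = κ(ω)(v), where ρ(ω)(v) = t(ω) ⊗ v + r(ω)(v) and κ(ω)(v) = e(ω) ⊗ K(v). -/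
/-!
Both sides are `k`-linear in `ω ∈ J(g)`, so it suffices to treat the generators
`ω = x ⊗ y - y ⊗ x` of `Λ(g)`. For these, `r(ω)` and `[∇_x, ∇_y] - ∇_{[x,y]}` are derivations
of `T(g)` agreeing on `g`, hence equal. Writing `Ψ_z = L_z + ∇_z`, a direct expansion gives
`ω ⊗ v + ρ(ω)(v) = (Ψ_x Ψ_y - Ψ_y Ψ_x - Ψ_{[x,y]})(v)`, and the defining property of `K` says
exactly that `K Ψ_z = L_z K`.
-/

set_option linter.unusedSectionVars false

noncomputable section
open TensorAlgebra TensorProduct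

variable (k : Type) [Field k] [CharZero k] (g : Type) [LieRing g] [LieAlgebra k g]

section General

variable {R : Type*} [CommRing R]

theorem LinearMap.eq_of_mem_span_of_eqOn {M N : Type*} [AddCommGroup M] [Module R M]
    [AddCommGroup N] [Module R N] {p : Submodule R M} {s : Set M} (hs : Submodule.span R s ≤ p)
    {f f' : p →ₗ[R] N}
    (h : ∀ w (hw : w ∈ s),
      f ⟨w, hs (Submodule.subset_span hw)⟩ = f' ⟨w, hs (Submodule.subset_span hw)⟩)
    {w : M} (hw : w ∈ Submodule.span R s) (hwp : w ∈ p) : f ⟨w, hwp⟩ = f' ⟨w, hwp⟩ := by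
  have hle : Submodule.span R s ≤ (LinearMap.eqLocus f f').map p.subtype :=
    Submodule.span_le.2 fun w hw => ⟨_, h w hw, rfl⟩
  obtain ⟨u, hu, rfl⟩ := hle hw
  exact hu

theorem TensorAlgebra.ext_of_leibniz {M : Type*} [AddCommGroup M] [Module R M]
    {D D' : Module.End R (TensorAlgebra R M)}
    (hD : ∀ a b, D (a * b) = D a * b + a * D b) (hD' : ∀ a b, D' (a * b) = D' a * b + a * D' b)
    (hι : ∀ z, D (ι R z) = D' (ι R z)) : D = D' := by
  have hD1 : D 1 = 0 := by simpa using hD 1 1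
  have hD'1 : D' 1 = 0 := by simpa using hD' 1 1
  ext a
  induction a using TensorAlgebra.induction with
  | algebraMap c => rw [Algebra.algebraMap_eq_smul_one, map_smul, map_smul, hD1, hD'1]
  | ι z => exact hι z
  | mul a b ha hb => rw [hD, hD', ha, hb]
  | add a b ha hb => rw [map_add, map_add, ha, hb]

variable {A : Type*} [Ring A]

theorem leibniz_commutator_sub [Module R A] {D₁ D₂ D₃ : Module.End R A}
    (h₁ : ∀ a b, D₁ (a * b) = D₁ a * b + a * D₁ b) (h₂ : ∀ a b, D₂ (a * b) = D₂ a * b + a * D₂ b)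
    (h₃ : ∀ a b, D₃ (a * b) = D₃ a * b + a * D₃ b) (a b : A) :
    (D₁ * D₂ - D₂ * D₁ - D₃) (a * b) =
      (D₁ * D₂ - D₂ * D₁ - D₃) a * b + a * (D₁ * D₂ - D₂ * D₁ - D₃) b := by
  simp only [LinearMap.sub_apply, Module.End.mul_apply, h₁, h₂, h₃, map_add]
  noncomm_ring

theorem commutator_mulLeft_add_leibniz [Algebra R A] {D₁ D₂ : Module.End R A}
    (h₁ : ∀ a b, D₁ (a * b) = D₁ a * b + a * D₁ b) (h₂ : ∀ a b, D₂ (a * b) = D₂ a * b + a * D₂ b)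
    (a₁ a₂ : A) :
    (LinearMap.mulLeft R a₁ + D₁) * (LinearMap.mulLeft R a₂ + D₂)
        - (LinearMap.mulLeft R a₂ + D₂) * (LinearMap.mulLeft R a₁ + D₁) =
      LinearMap.mulLeft R (a₁ * a₂ - a₂ * a₁ + D₁ a₂ - D₂ a₁) + (D₁ * D₂ - D₂ * D₁) := by
  ext v
  simp only [LinearMap.sub_apply, LinearMap.add_apply, Module.End.mul_apply,
    LinearMap.mulLeft_apply, map_add, h₁, h₂]
  noncomm_ring

end General

section Generators

variable {k g} (d : g →ₗ[k] g →ₗ[k] g) (N : g → Module.End k (TensorAlgebra k g))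

theorem rD_commutator
    (hNd : ∀ (x : g) (a b : TensorAlgebra k g), N x (a * b) = N x a * b + a * N x b)
    (hN : ∀ x y : g, N x (ι k y) = ι k (d x y)) (r : Jg k g →ₗ[k] Module.End k g)
    (hr1 : ∀ (x y : g) (h : ι k x * ι k y - ι k y * ι k x ∈ Jg k g) (z : g),
      r ⟨_, h⟩ z = d x (d y z) - d y (d x z) - d ⁅x, y⁆ z)
    (rD : Jg k g →ₗ[k] Module.End k (TensorAlgebra k g))
    (hrD1 : ∀ (u : Jg k g) (z : g), rD u (ι k z) = ι k (r u z))
    (hrD2 : ∀ (u : Jg k g) (a b : TensorAlgebra k g),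
      rD u (a * b) = rD u a * b + a * rD u b)
    (x y : g) (h : ι k x * ι k y - ι k y * ι k x ∈ Jg k g) :
    rD ⟨_, h⟩ = N x * N y - N y * N x - N ⁅x, y⁆ := by
  refine TensorAlgebra.ext_of_leibniz (hrD2 _) (leibniz_commutator_sub (hNd x) (hNd y) (hNd _)) ?_
  intro z
  simp only [hrD1, hr1 x y h z, LinearMap.sub_apply, Module.End.mul_apply, hN, map_sub]

theorem K_commutator_mul_add
    (hNd : ∀ (x : g) (a b : TensorAlgebra k g), N x (a * b) = N x a * b + a * N x b)
    (hN : ∀ x y : g, N x (ι k y) = ι k (d x y)) (K : TensorAlgebra k g →ₗ[k] TensorAlgebra k g)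
    (hK : ∀ (x : g) (u : TensorAlgebra k g), K (ι k x * u + N x u) = ι k x * K u)
    (x y : g) (v : TensorAlgebra k g) :
    K ((ι k x * ι k y - ι k y * ι k x) * v
        + (ι k (d x y - d y x - ⁅x, y⁆) * v + (N x * N y - N y * N x - N ⁅x, y⁆) v)) =
      (ι k x * ι k y - ι k y * ι k x - ι k ⁅x, y⁆) * K v := by
  let Ψ : g → Module.End k (TensorAlgebra k g) := fun z => LinearMap.mulLeft k (ι k z) + N z
  have hΨ : (ι k x * ι k y - ι k y * ι k x) * v
        + (ι k (d x y - d y x - ⁅x, y⁆) * v + (N x * N y - N y * N x - N ⁅x, y⁆) v) =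
      (Ψ x * Ψ y - Ψ y * Ψ x - Ψ ⁅x, y⁆) v := by
    rw [LinearMap.sub_apply, commutator_mulLeft_add_leibniz (hNd x) (hNd y)]
    simp only [Ψ, hN, map_sub, LinearMap.add_apply, LinearMap.sub_apply, LinearMap.mulLeft_apply]
    noncomm_ring
  have hKΨ : ∀ z u, K (Ψ z u) = ι k z * K u := hK
  rw [hΨ, LinearMap.sub_apply, LinearMap.sub_apply, Module.End.mul_apply, Module.End.mul_apply,
    map_sub, map_sub, hKΨ, hKΨ, hKΨ, hKΨ, hKΨ]
  noncomm_ring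

end Generators

theorem lemma_two
    (d : g →ₗ[k] g →ₗ[k] g)
    (N : g → Module.End k (TensorAlgebra k g))
    (hNd : ∀ (x : g) (a b : TensorAlgebra k g), N x (a * b) = N x a * b + a * N x b)
    (hN : ∀ x y : g, N x (ι k y) = ι k (d x y))
    (K : TensorAlgebra k g →ₗ[k] TensorAlgebra k g)
    (hK : ∀ (x : g) (u : TensorAlgebra k g), K (ι k x * u + N x u) = ι k x * K u)
    (t : Jg k g →ₗ[k] g)
    (ht1 : ∀ (x y : g) (h : ι k x * ι k y - ι k y * ι k x ∈ Jg k g),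
      t ⟨_, h⟩ = d x y - d y x - ⁅x, y⁆)
    (r : Jg k g →ₗ[k] Module.End k g)
    (hr1 : ∀ (x y : g) (h : ι k x * ι k y - ι k y * ι k x ∈ Jg k g) (z : g),
      r ⟨_, h⟩ z = d x (d y z) - d y (d x z) - d ⁅x, y⁆ z)
    (rD : Jg k g →ₗ[k] Module.End k (TensorAlgebra k g))
    (hrD1 : ∀ (u : Jg k g) (z : g), rD u (ι k z) = ι k (r u z))
    (hrD2 : ∀ (u : Jg k g) (a b : TensorAlgebra k g),
      rD u (a * b) = rD u a * b + a * rD u b)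
    (e : Jg k g →ₗ[k] TensorAlgebra k g)
    (he1 : ∀ (x y : g) (h : ι k x * ι k y - ι k y * ι k x ∈ Jg k g),
      e ⟨_, h⟩ = ι k x * ι k y - ι k y * ι k x - ι k ⁅x, y⁆)
    (ω : TensorAlgebra k g) (hω : ω ∈ Lam k g) (hJ : ω ∈ Jg k g)
    (v : TensorAlgebra k g) :
    K (ω * v + (ι k (t ⟨ω, hJ⟩) * v + rD ⟨ω, hJ⟩ v)) = e ⟨ω, hJ⟩ * K v := by
  let lhs : Jg k g →ₗ[k] TensorAlgebra k g := K ∘ₗ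
    (LinearMap.mulRight k v ∘ₗ (Jg k g).subtype
      + (LinearMap.mulRight k v ∘ₗ ι k ∘ₗ t + LinearMap.applyₗ v ∘ₗ rD))
  let rhs : Jg k g →ₗ[k] TensorAlgebra k g := LinearMap.mulRight k (K v) ∘ₗ e
  refine LinearMap.eq_of_mem_span_of_eqOn (f := lhs) (f' := rhs) (Lam_le_Jg k g) ?_ hω hJ
  rintro _ ⟨x, y, rfl⟩
  have hgen := K_commutator_mul_add d N hNd hN K hK x y v
  simp only [lhs, rhs, LinearMap.comp_apply, LinearMap.add_apply, LinearMap.mulRight_apply,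
    LinearMap.applyₗ_apply_apply, Submodule.subtype_apply]
  rwa [ht1, he1, rD_commutator d N hNd hN r hr1 rD hrD1 hrD2]
end
end

section
/- Lemma 4 (Equation 19): Let g be a framed Lie algebra over k. For all z ∈ g and Q ∈ J(g), κ(z ⊗ Q + ∇_z Q) = L_z ∘ κ(Q) − κ(Q) ∘ ∇_z as k-linear endomorphisms of T(g). -/
/-!
Both sides are linear in `Q`, so it suffices to take `Q = a * ω` with `ω ∈ Λ(g)`. As `∇_z` is a
derivation, `z * (a * ω) + ∇_z (a * ω) = (z * a + ∇_z a) * ω + a * ∇_z ω` with `∇_z ω ∈ Λ(g)`, and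
`Δ` intertwines `∇_z` with the derivation `∇_z ⊗ 1 + 1 ⊗ ∇_z`, while `Δ z = z ⊗ 1 + 1 ⊗ z`.
On a pure tensor `p ⊗ q` the defining relations of `e` and `K` give
`e((z p + ∇_z p) ω) + e(p ∇_z ω) = z e(p ω) - e(p ω) z` and
`K((z q + ∇_z q) v) + K(q ∇_z v) = z K(q v)`;
the two terms `∓ e(p ω) z K(q v)` cancel, leaving `z e(p ω) K(q v) - e(p ω) K(q ∇_z v)`.
-/

set_option linter.unusedSectionVars false

noncomputable section
open TensorAlgebra TensorProduct

variable (k : Type) [Field k] [CharZero k] (g : Type) [LieRing g] [LieAlgebra k g]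

/-- The standard coproduct `Δ` of the tensor algebra, the unique algebra map with
`Δ(x) = x ⊗̂ 1 + 1 ⊗̂ x` for `x ∈ g`. -/
def delta : TensorAlgebra k g →ₐ[k] TensorAlgebra k g ⊗[k] TensorAlgebra k g :=
  TensorAlgebra.lift k
    (((TensorProduct.mk k (TensorAlgebra k g) (TensorAlgebra k g)).flip 1
        + TensorProduct.mk k (TensorAlgebra k g) (TensorAlgebra k g) 1) ∘ₗ ι k)

/-- The right-hand side `e(u₍₁₎ ⊗ ω) ⊗ K(u₍₂₎ ⊗ v)` of the defining formula of `κ`,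
written with the coproduct `Δ` instead of Sweedler notation. -/
def kappaRHS (e : Jg k g →ₗ[k] TensorAlgebra k g)
    (K : TensorAlgebra k g →ₗ[k] TensorAlgebra k g)
    {ω : TensorAlgebra k g} (hω : ω ∈ Lam k g) (v u : TensorAlgebra k g) :
    TensorAlgebra k g :=
  TensorProduct.lift
    ((LinearMap.mul k (TensorAlgebra k g) ∘ₗ (e ∘ₗ mulJ k g hω)).compl₂
      (K ∘ₗ LinearMap.mulRight k v))
    (delta k g u)

section Leibniz

variable {R A : Type*} [CommSemiring R]

section Ring

variable [Ring A] [Algebra R A]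

lemma map_one_eq_zero_of_leibniz {D : Module.End R A}
    (hD : ∀ a b, D (a * b) = D a * b + a * D b) : D 1 = 0 := by
  simpa using hD 1 1

lemma map_algebraMap_eq_zero_of_leibniz {D : Module.End R A}
    (hD : ∀ a b, D (a * b) = D a * b + a * D b) (r : R) : D (algebraMap R A r) = 0 := by
  rw [Algebra.algebraMap_eq_smul_one, map_smul, map_one_eq_zero_of_leibniz hD, smul_zero]

end Ring

variable [Semiring A] [Algebra R A]

variable (A) in
def tensorDeriv (D : Module.End R A) : Module.End R (A ⊗[R] A) :=
  D.rTensor A + D.lTensor A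

@[simp]
lemma tensorDeriv_tmul (D : Module.End R A) (a b : A) :
    tensorDeriv A D (a ⊗ₜ b) = D a ⊗ₜ b + a ⊗ₜ D b := by
  simp [tensorDeriv]

lemma tensorDeriv_mul {D : Module.End R A} (hD : ∀ a b, D (a * b) = D a * b + a * D b)
    (s t : A ⊗[R] A) :
    tensorDeriv A D (s * t) = tensorDeriv A D s * t + s * tensorDeriv A D t := by
  induction s using TensorProduct.induction_on with
  | zero => simp
  | add s₁ s₂ h₁ h₂ => simp only [add_mul, map_add, h₁, h₂]; abel
  | tmul a b =>
    induction t using TensorProduct.induction_on with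
    | zero => simp
    | add t₁ t₂ h₁ h₂ => simp only [mul_add, map_add, h₁, h₂]; abel
    | tmul c e =>
      simp only [Algebra.TensorProduct.tmul_mul_tmul, tensorDeriv_tmul, hD, add_tmul, tmul_add,
        add_mul, mul_add]
      abel

end Leibniz

section TensorAlgebra

variable {k g}
variable {D : Module.End k (TensorAlgebra k g)}

lemma mulJ_apply {ω : TensorAlgebra k g} (hω : ω ∈ Lam k g) (a : TensorAlgebra k g) :
    mulJ k g hω a = ⟨a * ω, mul_mem_Jg k g hω a⟩ :=
  rfl

lemma Jg_ext {M : Type*} [AddCommGroup M] [Module k M] {f f' : Jg k g →ₗ[k] M}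
    (h : ∀ (ω : TensorAlgebra k g) (hω : ω ∈ Lam k g), f ∘ₗ mulJ k g hω = f' ∘ₗ mulJ k g hω) :
    f = f' := by
  refine LinearMap.ext_on Submodule.span_span_coe_preimage ?_
  rintro ⟨_, _⟩ ⟨a, x, y, rfl⟩
  exact LinearMap.congr_fun (h _ (Submodule.subset_span ⟨x, y, rfl⟩)) a

lemma map_mem_Lam (hD : ∀ a b, D (a * b) = D a * b + a * D b) {f : g → g}
    (hDι : ∀ y, D (ι k y) = ι k (f y)) {ω : TensorAlgebra k g} (hω : ω ∈ Lam k g) :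
    D ω ∈ Lam k g := by
  induction hω using Submodule.span_induction with
  | mem w hw =>
    obtain ⟨x, y, rfl⟩ := hw
    have hsplit : D (ι k x * ι k y - ι k y * ι k x)
        = (ι k (f x) * ι k y - ι k y * ι k (f x)) + (ι k x * ι k (f y) - ι k (f y) * ι k x) := by
      rw [map_sub, hD, hD, hDι, hDι]
      abel
    rw [hsplit]
    exact add_mem (Submodule.subset_span ⟨f x, y, rfl⟩) (Submodule.subset_span ⟨x, f y, rfl⟩)
  | zero => simp
  | add u v _ _ hu hv => rw [map_add]; exact add_mem hu hv
  | smul a u _ hu => rw [map_smul]; exact Submodule.smul_mem _ a hu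

lemma mul_mem_Jg_of_mem_Jg (b : TensorAlgebra k g) {q : TensorAlgebra k g} (hq : q ∈ Jg k g) :
    b * q ∈ Jg k g := by
  induction hq using Submodule.span_induction with
  | mem w hw =>
    obtain ⟨a, x, y, rfl⟩ := hw
    exact Submodule.subset_span ⟨b * a, x, y, by rw [mul_assoc]⟩
  | zero => simp
  | add u v _ _ hu hv => simpa [mul_add] using add_mem hu hv
  | smul a u _ hu => simpa [mul_smul_comm] using Submodule.smul_mem _ a hu

lemma map_mem_Jg (hD : ∀ a b, D (a * b) = D a * b + a * D b) {f : g → g}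
    (hDι : ∀ y, D (ι k y) = ι k (f y)) {q : TensorAlgebra k g} (hq : q ∈ Jg k g) :
    D q ∈ Jg k g := by
  induction hq using Submodule.span_induction with
  | mem w hw =>
    obtain ⟨a, x, y, rfl⟩ := hw
    rw [hD]
    exact add_mem (Submodule.subset_span ⟨D a, x, y, rfl⟩)
      (mul_mem_Jg k g (map_mem_Lam hD hDι (Submodule.subset_span ⟨x, y, rfl⟩)) a)
  | zero => simp
  | add u v _ _ hu hv => rw [map_add]; exact add_mem hu hv
  | smul a u _ hu => rw [map_smul]; exact Submodule.smul_mem _ a hu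

variable (k) in
lemma delta_ι (x : g) : delta k g (ι k x) = ι k x ⊗ₜ 1 + 1 ⊗ₜ ι k x := by
  simp [delta]

lemma delta_map_of_leibniz (hD : ∀ a b, D (a * b) = D a * b + a * D b) {f : g → g}
    (hDι : ∀ y, D (ι k y) = ι k (f y)) (u : TensorAlgebra k g) :
    delta k g (D u) = tensorDeriv _ D (delta k g u) := by
  induction u using TensorAlgebra.induction with
  | algebraMap r =>
    rw [map_algebraMap_eq_zero_of_leibniz hD, AlgHom.commutes,
      Algebra.TensorProduct.algebraMap_apply, Algebra.algebraMap_eq_smul_one, ← smul_tmul']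
    simp [map_one_eq_zero_of_leibniz hD]
  | ι x => simp [hDι, delta_ι, map_one_eq_zero_of_leibniz hD]
  | mul a b ha hb => rw [hD, map_add, map_mul, map_mul, ha, hb, map_mul, tensorDeriv_mul hD]
  | add a b ha hb => simp only [map_add, ha, hb]

lemma e_mulJ_leibniz (hD : ∀ a b, D (a * b) = D a * b + a * D b)
    {e : Jg k g →ₗ[k] TensorAlgebra k g} {x : g}
    (he : ∀ (u : Jg k g) (h : ι k x * (u : TensorAlgebra k g) + D u ∈ Jg k g),
      e ⟨_, h⟩ = ι k x * e u - e u * ι k x)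
    {ω : TensorAlgebra k g} (hω : ω ∈ Lam k g) (hDω : D ω ∈ Lam k g) (p : TensorAlgebra k g) :
    e (mulJ k g hω (ι k x * p)) + e (mulJ k g hω (D p)) + e (mulJ k g hDω p)
      = ι k x * e (mulJ k g hω p) - e (mulJ k g hω p) * ι k x := by
  have hsum : ι k x * (p * ω) + D (p * ω) = ι k x * p * ω + D p * ω + p * D ω := by
    rw [hD, mul_assoc]; abel
  rw [← map_add, ← map_add, ← he (mulJ k g hω p) (hsum ▸ add_mem (add_mem
    (mul_mem_Jg k g hω _) (mul_mem_Jg k g hω _)) (mul_mem_Jg k g hDω p))]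
  exact congrArg e (Subtype.ext hsum.symm)

lemma K_mulRight_leibniz (hD : ∀ a b, D (a * b) = D a * b + a * D b)
    {K : TensorAlgebra k g →ₗ[k] TensorAlgebra k g} {x : g}
    (hK : ∀ u, K (ι k x * u + D u) = ι k x * K u) (q v : TensorAlgebra k g) :
    K (ι k x * q * v) + K (D q * v) + K (q * D v) = ι k x * K (q * v) := by
  rw [← map_add, ← map_add, ← hK, hD, mul_assoc]
  congr 1; abel

lemma kappaRHS_leibniz (hD : ∀ a b, D (a * b) = D a * b + a * D b) {f : g → g}
    (hDι : ∀ y, D (ι k y) = ι k (f y))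
    {K : TensorAlgebra k g →ₗ[k] TensorAlgebra k g} {e : Jg k g →ₗ[k] TensorAlgebra k g} {x : g}
    (hK : ∀ u, K (ι k x * u + D u) = ι k x * K u)
    (he : ∀ (u : Jg k g) (h : ι k x * (u : TensorAlgebra k g) + D u ∈ Jg k g),
      e ⟨_, h⟩ = ι k x * e u - e u * ι k x)
    {ω : TensorAlgebra k g} (hω : ω ∈ Lam k g) (hDω : D ω ∈ Lam k g) (v a : TensorAlgebra k g) :
    kappaRHS k g e K hω v (ι k x * a + D a) + kappaRHS k g e K hDω v a
      = ι k x * kappaRHS k g e K hω v a - kappaRHS k g e K hω (D v) a := by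
  unfold kappaRHS
  rw [map_add, map_mul, delta_ι, delta_map_of_leibniz hD hDι]
  induction delta k g a using TensorProduct.induction_on with
  | zero => simp
  | add s t hs ht =>
    simp only [mul_add, map_add] at hs ht ⊢
    convert congrArg₂ (· + ·) hs ht using 1 <;> abel
  | tmul p q =>
    simp only [add_mul, Algebra.TensorProduct.tmul_mul_tmul, one_mul, tensorDeriv_tmul, map_add,
      lift.tmul, LinearMap.compl₂_apply, LinearMap.comp_apply, LinearMap.mul_apply',
      LinearMap.mulRight_apply]
    calc _ = (e (mulJ k g hω (ι k x * p)) + e (mulJ k g hω (D p)) + e (mulJ k g hDω p))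
            * K (q * v)
          + e (mulJ k g hω p) * (K (ι k x * q * v) + K (D q * v) + K (q * D v))
          - e (mulJ k g hω p) * K (q * D v) := by noncomm_ring
      _ = _ := by
        rw [e_mulJ_leibniz hD he hω hDω p, K_mulRight_leibniz hD hK q v]
        noncomm_ring

lemma kappa_mulJ_leibniz (hD : ∀ a b, D (a * b) = D a * b + a * D b) {f : g → g}
    (hDι : ∀ y, D (ι k y) = ι k (f y))
    {K : TensorAlgebra k g →ₗ[k] TensorAlgebra k g} {e : Jg k g →ₗ[k] TensorAlgebra k g} {x : g}
    (hK : ∀ u, K (ι k x * u + D u) = ι k x * K u)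
    (he : ∀ (u : Jg k g) (h : ι k x * (u : TensorAlgebra k g) + D u ∈ Jg k g),
      e ⟨_, h⟩ = ι k x * e u - e u * ι k x)
    {κ : Jg k g →ₗ[k] Module.End k (TensorAlgebra k g)}
    (hκ : ∀ (u ω : TensorAlgebra k g) (hω : ω ∈ Lam k g) (h : u * ω ∈ Jg k g)
      (v : TensorAlgebra k g), κ ⟨u * ω, h⟩ v = kappaRHS k g e K hω v u)
    {ω : TensorAlgebra k g} (hω : ω ∈ Lam k g) (a v : TensorAlgebra k g)
    (h : ι k x * (a * ω) + D (a * ω) ∈ Jg k g) :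
    κ ⟨_, h⟩ v = ι k x * κ (mulJ k g hω a) v - κ (mulJ k g hω a) (D v) := by
  have hDω := map_mem_Lam hD hDι hω
  have hsplit : (⟨_, h⟩ : Jg k g) = mulJ k g hω (ι k x * a + D a) + mulJ k g hDω a := by
    ext
    change ι k x * (a * ω) + D (a * ω) = (ι k x * a + D a) * ω + a * D ω
    rw [hD, add_mul, mul_assoc]
    abel
  rw [hsplit, map_add, LinearMap.add_apply, mulJ_apply, mulJ_apply, mulJ_apply, hκ, hκ, hκ, hκ]
  exact kappaRHS_leibniz hD hDι hK he hω hDω v a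

end TensorAlgebra

theorem lemma_four
    (d : g →ₗ[k] g →ₗ[k] g)
    (N : g → Module.End k (TensorAlgebra k g))
    (hNd : ∀ (x : g) (a b : TensorAlgebra k g), N x (a * b) = N x a * b + a * N x b)
    (hN : ∀ x y : g, N x (ι k y) = ι k (d x y))
    (K : TensorAlgebra k g →ₗ[k] TensorAlgebra k g)
    (hK : ∀ (x : g) (u : TensorAlgebra k g), K (ι k x * u + N x u) = ι k x * K u)
    (e : Jg k g →ₗ[k] TensorAlgebra k g)
    (he2 : ∀ (x : g) (u : Jg k g) (h : ι k x * (u : TensorAlgebra k g) + N x u ∈ Jg k g),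
      e ⟨_, h⟩ = ι k x * e u - e u * ι k x)
    (κ : Jg k g →ₗ[k] Module.End k (TensorAlgebra k g))
    (hκ : ∀ (u ω : TensorAlgebra k g) (hω : ω ∈ Lam k g) (h : u * ω ∈ Jg k g)
      (v : TensorAlgebra k g), κ ⟨u * ω, h⟩ v = kappaRHS k g e K hω v u)
    (z : g) (Q : Jg k g) (h : ι k z * (Q : TensorAlgebra k g) + N z Q ∈ Jg k g) :
    κ ⟨ι k z * (Q : TensorAlgebra k g) + N z Q, h⟩
      = LinearMap.mulLeft k (ι k z) ∘ₗ κ Q - κ Q ∘ₗ N z := by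
  have hJ : ∀ q ∈ Jg k g, (LinearMap.mulLeft k (ι k z) + N z) q ∈ Jg k g := fun q hq =>
    add_mem (mul_mem_Jg_of_mem_Jg _ hq) (map_mem_Jg (hNd z) (hN z) hq)
  have hκz : κ ∘ₗ (LinearMap.mulLeft k (ι k z) + N z).restrict hJ
      = (LinearMap.mulLeft k (LinearMap.mulLeft k (ι k z)) - LinearMap.mulRight k (N z))
          ∘ₗ κ := by
    refine Jg_ext fun ω hω => LinearMap.ext fun a => LinearMap.ext fun v => ?_
    exact kappa_mulJ_leibniz (hNd z) (hN z) (hK z) (he2 z) hκ hω a v _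
  exact LinearMap.congr_fun hκz Q
end
end

section
/- Existence and uniqueness of t: Let g be a framed Lie algebra over k. There exists exactly one k-linear map t : J(g) → g such that t(x ⊗ y − y ⊗ x) = x ⋄ y − y ⋄ x − [x, y] for all x, y ∈ g, and t(x ⊗ u + ∇_x u) = x ⋄ t(u) for all x ∈ g and u ∈ J(g). -/
/-!
Write `ξ_x = L_x + ∇_x`. Since `L_x = ξ_x - ∇_x` and `∇_x` preserves word length and `Λ(g)`,
induction on word length shows that `J(g)` is the smallest `ξ`-stable subspace of `T(g)`
containing `Λ(g)`. Uniqueness follows, as two solutions agree on such a subspace.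

For existence let `Ξ : T(g) → End T(g)` be the algebra map with `Ξ x = ξ_x`, and
`C : T(g) ⊗ (g ⊗ g) → T(g)`, `a ⊗ w ↦ Ξ(a) w`. It intertwines `L_x ⊗ 1` with `ξ_x`, so its image
contains `J(g)`, and it is injective, because it differs from the injective map `a ⊗ w ↦ a w`
only by terms in which `a` is replaced by shorter words. Hence `t (C (a ⊗ w)) = ρ(a) β(w)` is
well defined, where `ρ : T(g) → End g` extends `x ↦ x ⋄ -` and
`β (x ⊗ y) = ½ (x ⋄ y - y ⋄ x - [x, y])`.
-/

set_option linter.unusedSectionVars false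

noncomputable section
open TensorAlgebra TensorProduct

variable (k : Type) [Field k] [CharZero k] (g : Type) [LieRing g] [LieAlgebra k g]

theorem LinearMap.injective_of_map_sub_le_map {R M N : Type*} [Ring R] [AddCommGroup M]
    [Module R M] [AddCommGroup N] [Module R N] {f h : M →ₗ[R] N} (hh : Function.Injective h)
    {F : ℕ → Submodule R M} (hF₀ : F 0 = ⊥) (hF : ∀ s, ∃ n, s ∈ F n)
    (hfh : ∀ n, (F (n + 1)).map (f - h) ≤ (F n).map h) : Function.Injective f := by
  have eq_zero_of_mem : ∀ n, ∀ s ∈ F n, f s = 0 → s = 0 := by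
    intro n
    induction n with
    | zero => intro s hs _; simpa [hF₀] using hs
    | succ n ih =>
      intro s hs hfs
      obtain ⟨s', hs', hhs'⟩ := hfh n ⟨s, hs, rfl⟩
      have hs's : s' = -s := hh (by simpa [hfs] using hhs')
      exact ih s (by simpa [hs's] using hs') hfs
  refine (injective_iff_map_eq_zero f).2 fun s hs ↦ ?_
  obtain ⟨n, hn⟩ := hF s
  exact eq_zero_of_mem n s hn hs

section Leibniz

variable {R A : Type*} [CommRing R] [Ring A] [Algebra R A] {D : Module.End R A}
  (hD : ∀ a b, D (a * b) = D a * b + a * D b)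
include hD

theorem map_one_eq_zero_of_leibniz_s15 : D 1 = 0 := by
  simpa using hD 1 1

theorem one_mem_invtSubmodule_of_leibniz : (1 : Submodule R A) ∈ D.invtSubmodule :=
  Submodule.one_le.2 <| by simp [map_one_eq_zero_of_leibniz_s15 hD]

theorem mul_mem_invtSubmodule_of_leibniz {P Q : Submodule R A} (hP : P ∈ D.invtSubmodule)
    (hQ : Q ∈ D.invtSubmodule) : P * Q ∈ D.invtSubmodule :=
  Submodule.mul_le.2 fun p hp q hq ↦ by
    rw [Submodule.mem_comap, hD]
    exact add_mem (Submodule.mul_mem_mul (hP hp) hq) (Submodule.mul_mem_mul hp (hQ hq))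

end Leibniz

section InducedLift

variable {R A V W : Type*} [CommRing R] [Ring A] [Algebra R A] [AddCommGroup V] [Module R V]
  [AddCommGroup W] [Module R W] (φ : A →ₐ[R] Module.End R V) (β : W →ₗ[R] V)

def inducedLift : A ⊗[R] W →ₗ[R] V :=
  TensorProduct.lift (LinearMap.lcomp R V β ∘ₗ φ.toLinearMap)

@[simp]
theorem inducedLift_tmul (a : A) (w : W) : inducedLift φ β (a ⊗ₜ w) = φ a (β w) := rfl

theorem inducedLift_rTensor_mulLeft (a : A) (s : A ⊗[R] W) :
    inducedLift φ β (LinearMap.rTensor W (LinearMap.mulLeft R a) s) =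
      φ a (inducedLift φ β s) := by
  induction s with
  | zero => simp
  | tmul b w => simp
  | add s s' hs hs' => simp only [map_add, hs, hs']

end InducedLift

namespace TensorAlgebra

variable {R M : Type*} [CommRing R] [AddCommGroup M] [Module R M]

theorem leibniz_ext {D₁ D₂ : Module.End R (TensorAlgebra R M)}
    (h₁ : ∀ a b, D₁ (a * b) = D₁ a * b + a * D₁ b) (h₂ : ∀ a b, D₂ (a * b) = D₂ a * b + a * D₂ b)
    (h : ∀ m, D₁ (ι R m) = D₂ (ι R m)) : D₁ = D₂ := by
  ext a
  induction a using TensorAlgebra.induction with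
  | algebraMap r =>
    simp [Algebra.algebraMap_eq_smul_one, map_one_eq_zero_of_leibniz_s15 h₁,
      map_one_eq_zero_of_leibniz_s15 h₂]
  | ι m => exact h m
  | mul a b ha hb => rw [h₁, h₂, ha, hb]
  | add a b ha hb => rw [map_add, map_add, ha, hb]

/-- Spanned by the words of length `< n`, so that the `0`-th step is `⊥`. -/
def wordFiltration : ℕ → Submodule R (TensorAlgebra R M)
  | 0 => ⊥
  | n + 1 => 1 ⊔ LinearMap.range (ι R) * wordFiltration n

theorem wordFiltration_mono : Monotone (wordFiltration (R := R) (M := M)) := by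
  refine monotone_nat_of_le_succ fun n ↦ ?_
  induction n with
  | zero => exact bot_le
  | succ n ih => exact sup_le_sup_left (mul_le_mul_right ih _) _

theorem ι_mul_mem_wordFiltration (m : M) {n : ℕ} {a : TensorAlgebra R M}
    (ha : a ∈ wordFiltration n) : ι R m * a ∈ wordFiltration (n + 1) :=
  Submodule.mem_sup_right (Submodule.mul_mem_mul ⟨m, rfl⟩ ha)

theorem exists_mem_wordFiltration (a : TensorAlgebra R M) : ∃ n, a ∈ wordFiltration n := by
  suffices h : ∀ n, ∀ b ∈ wordFiltration n, ∃ m, a * b ∈ wordFiltration (R := R) m by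
    simpa using h 1 1 (Submodule.mem_sup_left (Submodule.one_le.1 le_rfl))
  induction a using TensorAlgebra.induction with
  | algebraMap r =>
    intro n b hb
    exact ⟨n, by simpa [Algebra.algebraMap_eq_smul_one] using Submodule.smul_mem _ r hb⟩
  | ι m => exact fun n b hb ↦ ⟨n + 1, ι_mul_mem_wordFiltration m hb⟩
  | mul a a' ha ha' =>
    intro n b hb
    obtain ⟨m, hm⟩ := ha' n b hb
    simpa [mul_assoc] using ha m _ hm
  | add a a' ha ha' =>
    intro n b hb
    obtain ⟨m, hm⟩ := ha n b hb
    obtain ⟨m', hm'⟩ := ha' n b hb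
    exact ⟨m + m', add_mul a a' b ▸ add_mem (wordFiltration_mono (by omega) hm)
      (wordFiltration_mono (by omega) hm')⟩

theorem wordFiltration_mem_invtSubmodule {D : Module.End R (TensorAlgebra R M)}
    (hD : ∀ a b, D (a * b) = D a * b + a * D b) (hι : LinearMap.range (ι R) ∈ D.invtSubmodule)
    (n : ℕ) : wordFiltration n ∈ D.invtSubmodule := by
  induction n with
  | zero => exact (Module.End.mem_invtSubmodule _).2 bot_le
  | succ n ih =>
    exact Sublattice.sup_mem (one_mem_invtSubmodule_of_leibniz hD)
      (mul_mem_invtSubmodule_of_leibniz hD hι ih)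

def ι₂ : M ⊗[R] M →ₗ[R] TensorAlgebra R M :=
  TensorProduct.lift ((LinearMap.mul R _).compl₂ (ι R) ∘ₗ ι R)

@[simp]
theorem ι₂_tmul (x y : M) : ι₂ (x ⊗ₜ y) = ι R x * ι R y := rfl

theorem range_ι₂ : LinearMap.range (ι₂ (R := R) (M := M)) =
    LinearMap.range (ι R) * LinearMap.range (ι R) := by
  refine le_antisymm ?_ (Submodule.mul_le.2 ?_)
  · rintro _ ⟨w, rfl⟩
    induction w with
    | zero => simp
    | tmul x y => exact Submodule.mul_mem_mul ⟨x, rfl⟩ ⟨y, rfl⟩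
    | add w w' hw hw' => rw [map_add]; exact add_mem hw hw'
  · rintro _ ⟨x, rfl⟩ _ ⟨y, rfl⟩
    exact ⟨x ⊗ₜ y, rfl⟩

theorem injective_inducedLift_lmul_ι₂ [Module.Free R M] :
    Function.Injective (inducedLift (Algebra.lmul R (TensorAlgebra R M)) (ι₂ (M := M))) := by
  let b := Module.Free.chooseBasis R M
  have hb : ∀ w i, b.tensorAlgebra (w * .of i) = b.tensorAlgebra w * ι R (b i) := by
    simp [Module.Basis.tensorAlgebra, FreeAlgebra.basisFreeMonoid,
      FreeAlgebra.equivMonoidAlgebraFreeMonoid]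
  refine LinearMap.injective_of_linearIndependent
    (b.tensorAlgebra.tensorProduct (b.tensorProduct b)).span_eq ?_
  let append₂ (p : FreeMonoid (Module.Free.ChooseBasisIndex R M) × _ × _) :=
    p.1 * FreeMonoid.of p.2.1 * FreeMonoid.of p.2.2
  have h : inducedLift (Algebra.lmul R _) ι₂ ∘ b.tensorAlgebra.tensorProduct (b.tensorProduct b) =
      b.tensorAlgebra ∘ append₂ := by
    ext ⟨w, i, j⟩
    simp [append₂, hb, ← mul_assoc]
  rw [h]
  refine b.tensorAlgebra.linearIndependent.comp _ ?_
  rintro ⟨w, i, j⟩ ⟨w', i', j'⟩ h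
  have h' : w.toList ++ [i, j] = w'.toList ++ [i', j'] := by
    simpa [append₂] using congrArg FreeMonoid.toList h
  obtain ⟨hw, hij⟩ := List.append_inj' h' rfl
  simp_all [FreeMonoid.toList.injective.eq_iff]

end TensorAlgebra

namespace FramedLieAlgebra

variable {k g}
omit [CharZero k]

def halfTorsion (d : g →ₗ[k] g →ₗ[k] g) : g ⊗[k] g →ₗ[k] g :=
  (2 : k)⁻¹ • TensorProduct.lift (d - d.flip - (LieAlgebra.ad k g : g →ₗ[k] Module.End k g))

theorem halfTorsion_tmul_sub_tmul [CharZero k] (d : g →ₗ[k] g →ₗ[k] g) (x y : g) :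
    halfTorsion d (x ⊗ₜ y - y ⊗ₜ x) = d x y - d y x - ⁅x, y⁆ := by
  simp only [halfTorsion, map_sub, LinearMap.smul_apply, lift.tmul, LinearMap.sub_apply,
    LinearMap.flip_apply, LieHom.coe_toLinearMap, LieAlgebra.ad_apply]
  rw [← lie_skew x y]
  module

theorem Jg_eq_top_mul_Lam : Jg k g = ⊤ * Lam k g := by
  rw [Jg, Lam, ← Submodule.span_univ, Submodule.span_mul_span]
  congr 1
  ext w
  constructor
  · rintro ⟨a, x, y, rfl⟩
    exact ⟨a, trivial, _, ⟨x, y, rfl⟩, rfl⟩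
  · rintro ⟨a, -, _, ⟨x, y, rfl⟩, rfl⟩
    exact ⟨a, x, y, rfl⟩

variable {d : g →ₗ[k] g →ₗ[k] g} {N : g → Module.End k (TensorAlgebra k g)}
  (hNd : ∀ (x : g) (a b : TensorAlgebra k g), N x (a * b) = N x a * b + a * N x b)
  (hN : ∀ x y : g, N x (ι k y) = ι k (d x y))

include hN in
theorem range_ι_mem_invtSubmodule (x : g) : LinearMap.range (ι k) ∈ (N x).invtSubmodule := by
  rintro _ ⟨y, rfl⟩
  exact ⟨d x y, (hN x y).symm⟩

include hNd hN in
theorem range_ι₂_mem_invtSubmodule (x : g) :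
    LinearMap.range (ι₂ (M := g)) ∈ (N x).invtSubmodule := by
  rw [range_ι₂]
  exact mul_mem_invtSubmodule_of_leibniz (hNd x) (range_ι_mem_invtSubmodule hN x)
    (range_ι_mem_invtSubmodule hN x)

include hNd hN in
theorem Lam_mem_invtSubmodule (x : g) : Lam k g ∈ (N x).invtSubmodule := by
  rw [Module.End.mem_invtSubmodule, Lam, Submodule.span_le]
  rintro _ ⟨y, z, rfl⟩
  have h : N x (ι k y * ι k z - ι k z * ι k y) =
      (ι k (d x y) * ι k z - ι k z * ι k (d x y)) +
        (ι k y * ι k (d x z) - ι k (d x z) * ι k y) := by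
    rw [map_sub, hNd, hNd, hN, hN]
    abel
  rw [SetLike.mem_coe, Submodule.mem_comap, h]
  exact add_mem (Submodule.subset_span ⟨_, _, rfl⟩) (Submodule.subset_span ⟨_, _, rfl⟩)

include hNd hN in
theorem ι_mul_add_mem_Jg (x : g) {u : TensorAlgebra k g} (hu : u ∈ Jg k g) :
    ι k x * u + N x u ∈ Jg k g := by
  rw [Jg_eq_top_mul_Lam] at hu ⊢
  have hleft : ⊤ * (⊤ * Lam k g) ≤ ⊤ * Lam k g := by
    rw [← mul_assoc]
    exact mul_le_mul_left le_top _
  exact add_mem (hleft (Submodule.mul_mem_mul trivial hu))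
    (mul_mem_invtSubmodule_of_leibniz (hNd x) (fun _ _ ↦ Submodule.mem_comap.2 Submodule.mem_top)
      (Lam_mem_invtSubmodule hNd hN x) hu)

include hNd hN in
theorem Jg_le_of_forall_ι_mul_add_mem {K : Submodule k (TensorAlgebra k g)}
    (hΛ : Lam k g ≤ K) (hK : ∀ x, ∀ u ∈ K, ι k x * u + N x u ∈ K) : Jg k g ≤ K := by
  have hV : ∀ n, wordFiltration n * Lam k g ≤ K := by
    intro n
    induction n with
    | zero => simp [wordFiltration]
    | succ n ih =>
      rw [wordFiltration, Submodule.sup_mul, one_mul, mul_assoc]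
      refine sup_le hΛ (Submodule.mul_le.2 ?_)
      rintro _ ⟨x, rfl⟩ u hu
      have hNu : N x u ∈ wordFiltration n * Lam k g :=
        mul_mem_invtSubmodule_of_leibniz (hNd x)
          (wordFiltration_mem_invtSubmodule (hNd x) (range_ι_mem_invtSubmodule hN x) n)
          (Lam_mem_invtSubmodule hNd hN x) hu
      simpa using sub_mem (hK x u (ih hu)) (ih hNu)
  rw [Jg_eq_top_mul_Lam, Submodule.mul_le]
  intro a _ ω hω
  obtain ⟨n, hn⟩ := exists_mem_wordFiltration a
  exact hV n (Submodule.mul_mem_mul hn hω)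

-- linear in `x`: a derivation of `T(g)` is determined by its values on `g`
def nablaLinear : g →ₗ[k] Module.End k (TensorAlgebra k g) where
  toFun := N
  map_add' x y := leibniz_ext (hNd _)
    (fun a b ↦ by simp only [LinearMap.add_apply, hNd]; noncomm_ring) fun z ↦ by simp [hN]
  map_smul' c x := leibniz_ext (hNd _)
    (fun a b ↦ by simp [hNd, smul_add]) fun z ↦ by simp [hN]

def twistedAction : TensorAlgebra k g →ₐ[k] Module.End k (TensorAlgebra k g) :=
  TensorAlgebra.lift k ((Algebra.lmul k _).toLinearMap ∘ₗ ι k + nablaLinear hNd hN)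

theorem twistedAction_ι (x : g) (u : TensorAlgebra k g) :
    twistedAction hNd hN (ι k x) u = ι k x * u + N x u := by
  simp [twistedAction, nablaLinear]

def twistedMul : TensorAlgebra k g ⊗[k] (g ⊗[k] g) →ₗ[k] TensorAlgebra k g :=
  inducedLift (twistedAction hNd hN) ι₂

theorem twistedMul_rTensor_mulLeft (x : g) (s : TensorAlgebra k g ⊗[k] (g ⊗[k] g)) :
    twistedMul hNd hN (LinearMap.rTensor _ (LinearMap.mulLeft k (ι k x)) s) =
      ι k x * twistedMul hNd hN s + N x (twistedMul hNd hN s) := by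
  rw [twistedMul, inducedLift_rTensor_mulLeft, twistedAction_ι]

theorem twistedMul_tmul_sub_mem (w : g ⊗[k] g) (n : ℕ) :
    ∀ a ∈ wordFiltration (n + 1), twistedMul hNd hN (a ⊗ₜ w) - a * ι₂ w ∈
      wordFiltration n * LinearMap.range ι₂ := by
  let δ : Module.End k (TensorAlgebra k g) :=
    (twistedMul hNd hN - inducedLift (Algebra.lmul k _) ι₂) ∘ₗ (TensorProduct.mk k _ _).flip w
  have hδ : ∀ a, δ a = twistedMul hNd hN (a ⊗ₜ w) - a * ι₂ w := fun _ ↦ rfl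
  have hδ₁ : δ 1 = 0 := by simp [hδ, twistedMul]
  have hδι : ∀ x a, δ (ι k x * a) = ι k x * δ a + N x (twistedMul hNd hN (a ⊗ₜ w)) := by
    intro x a
    simp only [hδ, twistedMul, inducedLift_tmul, map_mul, Module.End.mul_apply, twistedAction_ι]
    noncomm_ring
  suffices h : wordFiltration (n + 1) ≤ (wordFiltration n * LinearMap.range ι₂).comap δ from
    fun a ha ↦ hδ a ▸ h ha
  induction n with
  | zero =>
    refine sup_le (Submodule.one_le.2 (by simp [hδ₁])) (Submodule.mul_le.2 ?_)
    rintro _ ⟨x, rfl⟩ a ha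
    simp_all [wordFiltration]
  | succ n ih =>
    refine sup_le (Submodule.one_le.2 (by simp [hδ₁])) (Submodule.mul_le.2 ?_)
    rintro _ ⟨x, rfl⟩ a ha
    rw [Submodule.mem_comap, hδι]
    refine add_mem ?_ ?_
    · have hle : LinearMap.range (ι k) * (wordFiltration n * LinearMap.range (ι₂ (M := g))) ≤
          wordFiltration (n + 1) * LinearMap.range ι₂ := by
        rw [← mul_assoc]
        exact mul_le_mul_left le_sup_right _
      exact hle (Submodule.mul_mem_mul (LinearMap.mem_range_self (ι k) x) (ih ha))
    · have hC : twistedMul hNd hN (a ⊗ₜ w) ∈ wordFiltration (n + 1) * LinearMap.range ι₂ := by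
        rw [← sub_add_cancel (twistedMul hNd hN (a ⊗ₜ w)) (a * ι₂ w), ← hδ]
        exact add_mem (mul_le_mul_left (wordFiltration_mono n.le_succ) _ (ih ha))
          (Submodule.mul_mem_mul ha ⟨w, rfl⟩)
      exact mul_mem_invtSubmodule_of_leibniz (hNd x)
        (wordFiltration_mem_invtSubmodule (hNd x) (range_ι_mem_invtSubmodule hN x) _)
        (range_ι₂_mem_invtSubmodule hNd hN x) hC

theorem injective_twistedMul : Function.Injective (twistedMul hNd hN) := by
  refine LinearMap.injective_of_map_sub_le_map injective_inducedLift_lmul_ι₂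
    (F := fun n ↦ Submodule.map₂ (TensorProduct.mk k _ _) (wordFiltration n) ⊤)
    (by simp [wordFiltration]) (fun s ↦ ?_) (fun n ↦ ?_)
  · induction s with
    | zero => exact ⟨0, zero_mem _⟩
    | tmul a w =>
      obtain ⟨n, hn⟩ := exists_mem_wordFiltration a
      exact ⟨n, Submodule.apply_mem_map₂ _ hn trivial⟩
    | add s s' hs hs' =>
      obtain ⟨n, hn⟩ := hs
      obtain ⟨n', hn'⟩ := hs'
      exact ⟨n + n', add_mem
        (Submodule.map₂_le_map₂_left (wordFiltration_mono (n.le_add_right n')) hn)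
        (Submodule.map₂_le_map₂_left (wordFiltration_mono (n'.le_add_left n)) hn')⟩
  · rw [Submodule.map_le_iff_le_comap, Submodule.map₂_le]
    intro a ha w _
    change twistedMul hNd hN (a ⊗ₜ w) - a * ι₂ w ∈ Submodule.map _ _
    refine Submodule.mul_le.2 ?_ (twistedMul_tmul_sub_mem hNd hN w n a ha)
    rintro b hb _ ⟨w', rfl⟩
    exact ⟨b ⊗ₜ w', Submodule.apply_mem_map₂ _ hb trivial, rfl⟩

theorem Jg_le_range_twistedMul : Jg k g ≤ LinearMap.range (twistedMul hNd hN) := by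
  refine Jg_le_of_forall_ι_mul_add_mem hNd hN ?_ ?_
  · rw [Lam, Submodule.span_le]
    rintro _ ⟨x, y, rfl⟩
    exact ⟨1 ⊗ₜ (x ⊗ₜ y - y ⊗ₜ x), by simp [twistedMul]⟩
  · rintro x _ ⟨s, rfl⟩
    exact ⟨_, twistedMul_rTensor_mulLeft hNd hN x s⟩

include hNd hN in
theorem exists_linearMap_Jg_extending_torsion [CharZero k] :
    ∃ t : Jg k g →ₗ[k] g,
      (∀ (x y : g) (h : ι k x * ι k y - ι k y * ι k x ∈ Jg k g),
        t ⟨_, h⟩ = d x y - d y x - ⁅x, y⁆)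
      ∧ ∀ (x : g) (u : Jg k g) (h : ι k x * (u : TensorAlgebra k g) + N x u ∈ Jg k g),
        t ⟨_, h⟩ = d x (t u) := by
  obtain ⟨L, hL⟩ := (twistedMul hNd hN).exists_leftInverse_of_injective
    (LinearMap.ker_eq_bot.2 (injective_twistedMul hNd hN))
  have hLC : ∀ s, L (twistedMul hNd hN s) = s := LinearMap.congr_fun hL
  let ev := inducedLift (TensorAlgebra.lift k d) (halfTorsion d)
  refine ⟨ev ∘ₗ L ∘ₗ (Jg k g).subtype, fun x y h ↦ ?_, fun x u h ↦ ?_⟩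
  · have hC : ι k x * ι k y - ι k y * ι k x = twistedMul hNd hN (1 ⊗ₜ (x ⊗ₜ y - y ⊗ₜ x)) := by
      simp [twistedMul]
    simp [hC, hLC, ev, halfTorsion_tmul_sub_tmul]
  · obtain ⟨s, hs⟩ := Jg_le_range_twistedMul hNd hN u.2
    have hC : ι k x * u + N x u =
        twistedMul hNd hN (LinearMap.rTensor _ (LinearMap.mulLeft k (ι k x)) s) := by
      rw [twistedMul_rTensor_mulLeft, hs]
    simp only [LinearMap.comp_apply, Submodule.subtype_apply]
    rw [hC, ← hs, hLC, hLC]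
    simp [ev, inducedLift_rTensor_mulLeft]

include hNd hN in
theorem Jg_linearMap_ext {t₁ t₂ : Jg k g →ₗ[k] g}
    (h : ∀ (x y : g) (h : ι k x * ι k y - ι k y * ι k x ∈ Jg k g), t₁ ⟨_, h⟩ = t₂ ⟨_, h⟩)
    (h₁ : ∀ (x : g) (u : Jg k g) (h : ι k x * (u : TensorAlgebra k g) + N x u ∈ Jg k g),
      t₁ ⟨_, h⟩ = d x (t₁ u))
    (h₂ : ∀ (x : g) (u : Jg k g) (h : ι k x * (u : TensorAlgebra k g) + N x u ∈ Jg k g),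
      t₂ ⟨_, h⟩ = d x (t₂ u)) : t₁ = t₂ := by
  have hJ : Jg k g ≤ (LinearMap.eqLocus t₁ t₂).map (Jg k g).subtype := by
    refine Jg_le_of_forall_ι_mul_add_mem hNd hN ?_ ?_
    · rw [Lam, Submodule.span_le]
      rintro _ ⟨x, y, rfl⟩
      exact ⟨⟨_, Submodule.subset_span ⟨1, x, y, (one_mul _).symm⟩⟩, h x y _, rfl⟩
    · rintro x _ ⟨u, hu, rfl⟩
      refine ⟨⟨_, ι_mul_add_mem_Jg hNd hN x u.2⟩, ?_, rfl⟩
      rw [SetLike.mem_coe, LinearMap.mem_eqLocus] at hu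
      rw [SetLike.mem_coe, LinearMap.mem_eqLocus, h₁, h₂, hu]
  ext u
  obtain ⟨v, hv, hvu⟩ := hJ u.2
  rwa [← Subtype.ext hvu]

end FramedLieAlgebra

/-- **Existence and uniqueness of `t`.** There is exactly one `k`-linear map
`t : J(g) → g` with `t(x ⊗ y - y ⊗ x) = x ⋄ y - y ⋄ x - [x,y]` and
`t(x ⊗ u + ∇ₓ u) = x ⋄ t(u)`. -/
theorem t_exists_unique
    (d : g →ₗ[k] g →ₗ[k] g)
    (N : g → Module.End k (TensorAlgebra k g))
    (hNd : ∀ (x : g) (a b : TensorAlgebra k g), N x (a * b) = N x a * b + a * N x b)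
    (hN : ∀ x y : g, N x (ι k y) = ι k (d x y))
    : ∃! t : Jg k g →ₗ[k] g,
      (∀ (x y : g) (h : ι k x * ι k y - ι k y * ι k x ∈ Jg k g),
        t ⟨_, h⟩ = d x y - d y x - ⁅x, y⁆)
      ∧ ∀ (x : g) (u : Jg k g) (h : ι k x * (u : TensorAlgebra k g) + N x u ∈ Jg k g),
        t ⟨_, h⟩ = d x (t u) := by
  obtain ⟨t, ht₁, ht₂⟩ := FramedLieAlgebra.exists_linearMap_Jg_extending_torsion hNd hN
  exact ⟨t, ⟨ht₁, ht₂⟩, fun t' ⟨h₁, h₂⟩ ↦ FramedLieAlgebra.Jg_linearMap_ext hNd hN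
    (fun x y h ↦ (h₁ x y h).trans (ht₁ x y h).symm) h₂ ht₂⟩
end
end
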